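/- If P is a better partial order, then the set P^# of finite multisets of P equipped with the multiset projectivity relation << is a better partial order. -/

import Mathlib

/-!
`N << M` holds exactly when `N` embeds into `M` and every element of `M` lies above an element
of `N`. Both of these relations are bpos, and the intersection of two bpos is a bpo by
Nash-Williams' partition theorem applied to the shifted pairs of a front. Covering is reflected by
`M ↦ P \ ↑M` into the lower sets of `P`; embeddability is reflected, via Hall's marriage theorem,
by `M ↦ {(D, k) | more than k elements of M lie outside D}` into the lower sets of
(lower sets of `P`) × ℕ. Lower sets of a bpo form a bpo by the classical argument on the pair
front `F²`, and ℕ and products of bpos are bpos.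
-/

namespace Paper

/-- `s` is an initial segment of the finite set `t` (w.r.t. the increasing enumerations). -/
def InitSegF (s t : Finset ℕ) : Prop :=
  s ⊆ t ∧ ∀ a ∈ s, ∀ b ∈ t, b ∉ s → a < b

/-- The finite set `s` is an initial segment of the set `B ⊆ ℕ`. -/
def InitSegS (s : Finset ℕ) (B : Set ℕ) : Prop :=
  ↑s ⊆ B ∧ ∀ a ∈ s, ∀ b ∈ B, b ∉ s → a < b

/-- `F` is a front on the infinite set `A ⊆ ℕ`. -/
def IsFront (F : Set (Finset ℕ)) (A : Set ℕ) : Prop :=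
  A.Infinite ∧
  (F = {∅} ∨ (⋃ s ∈ F, (↑s : Set ℕ)) = A) ∧
  (∀ s ∈ F, ∀ t ∈ F, InitSegF s t → s = t) ∧
  (∀ B : Set ℕ, B ⊆ A → B.Infinite → ∃! s, s ∈ F ∧ InitSegS s B)

/-- `t` is a shift of `s`: `s ◁ t`. -/
def Shift (s t : Finset ℕ) : Prop :=
  ∃ B : Set ℕ, B.Infinite ∧ InitSegS s B ∧ InitSegS t (B \ {sInf B})

/-- A super-sequence `f` on the front `F` is bad for the relation `r`
if `s ◁ t` implies `¬ r (f s) (f t)` for members of `F`. -/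
def IsBadSuperSeq {α : Type*} (r : α → α → Prop) (F : Set (Finset ℕ))
    (f : Finset ℕ → α) : Prop :=
  ∀ s ∈ F, ∀ t ∈ F, Shift s t → ¬ r (f s) (f t)

/-- `r` is a better partial order: there is no bad super-sequence for `r`. -/
def IsBpo {α : Type*} (r : α → α → Prop) : Prop :=
  ¬ ∃ (A : Set ℕ) (F : Set (Finset ℕ)) (f : Finset ℕ → α),
      IsFront F A ∧ IsBadSuperSeq r F f



/-- Multiset projectivity: `MProj r N M` (`N << M`) holds iff there is a surjective
multiset map `f : M ↠ N` with `r (f p) p` for every occurrence `p` of `M`;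
equivalently, `M` splits into nonempty fibers indexed by the occurrences of `N`. -/
def MProj {α : Type*} (r : α → α → Prop) (N M : Multiset α) : Prop :=
  ∃ L : Multiset (α × Multiset α),
    L.map Prod.fst = N ∧ (L.map Prod.snd).sum = M ∧
    ∀ x ∈ L, x.2 ≠ 0 ∧ ∀ p ∈ x.2, r x.1 p

/-- Multiset embeddability: `MEmbed r N M` (`N ⪯ M`) holds iff there is an injective
multiset map `g : N ↪ M` with `r q (g q)` for all `q ∈ N`; equivalently, `N` is
related pointwise to a sub-multiset of `M`. -/
def MEmbed {α : Type*} (r : α → α → Prop) (N M : Multiset α) : Prop :=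
  ∃ M' ≤ M, Multiset.Rel r N M'

open Set Finset

section InitialSegments

variable {s t : Finset ℕ} {B X : Set ℕ} {a : ℕ}

theorem initSegF_iff_initSegS : InitSegF s t ↔ InitSegS s t := Iff.rfl

theorem initSegS_coe_self (s : Finset ℕ) : InitSegS s s :=
  ⟨Set.Subset.rfl, fun _ _ _ hb hbs => absurd hb hbs⟩

theorem initSegS_comparable (hs : InitSegS s B) (ht : InitSegS t B) :
    InitSegF s t ∨ InitSegF t s := by
  by_cases hst : s ⊆ t
  · exact Or.inl ⟨hst, fun a ha b hb => hs.2 a ha b (ht.1 hb)⟩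
  · refine Or.inr ⟨fun b hbt => ?_, fun a ha b hb => ht.2 a ha b (hs.1 hb)⟩
    obtain ⟨a, has, hat⟩ := Finset.not_subset.1 hst
    by_contra hbs
    exact (hs.2 a has b (ht.1 hbt) hbs).asymm (ht.2 b hbt a (hs.1 has) hat)

theorem InitSegS.sInf_mem (h : InitSegS s B) (hs : s.Nonempty) : sInf B ∈ s := by
  obtain ⟨a, ha⟩ := hs
  by_contra hm
  exact (h.2 a ha _ (Nat.sInf_mem ⟨a, h.1 ha⟩) hm).not_ge (Nat.sInf_le (h.1 ha))

theorem InitSegS.erase_sInf (h : InitSegS s B) :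
    InitSegS (s.erase (sInf B)) (B \ {sInf B}) := by
  refine ⟨fun x hx => ?_, fun x hx b hb hbs => ?_⟩
  · obtain ⟨hxm, hxs⟩ := Finset.mem_erase.1 hx
    exact ⟨h.1 hxs, hxm⟩
  · exact h.2 x (Finset.mem_of_mem_erase hx) b hb.1 fun hb' => hbs (Finset.mem_erase.2 ⟨hb.2, hb'⟩)

theorem InitSegS.insert_of_forall_lt (h : InitSegS t X) (hX : ∀ x ∈ X, a < x) :
    InitSegS (insert a t) (insert a X) := by
  refine ⟨by rw [Finset.coe_insert]; exact Set.insert_subset_insert h.1, fun x hx b hb hbt => ?_⟩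
  have hba : b ≠ a := fun hba => hbt (hba ▸ Finset.mem_insert_self a t)
  have hbX : b ∈ X := hb.resolve_left hba
  rcases Finset.mem_insert.1 hx with rfl | hxt
  · exact hX b hbX
  · exact h.2 x hxt b hbX fun hb' => hbt (Finset.mem_insert_of_mem hb')

theorem InitSegS.union (hs : InitSegS s B) (hsne : s.Nonempty)
    (ht : InitSegS t (B \ {sInf B})) : InitSegS (s ∪ t) B := by
  refine ⟨by rw [Finset.coe_union]; exact Set.union_subset hs.1 fun x hx => (ht.1 hx).1,
    fun x hx b hb hbst => ?_⟩
  rw [Finset.mem_union, not_or] at hbst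
  rcases Finset.mem_union.1 hx with hxs | hxt
  · exact hs.2 x hxs b hb hbst.1
  · refine ht.2 x hxt b ⟨hb, fun hbm => hbst.1 ?_⟩ hbst.2
    exact (Set.mem_singleton_iff.1 hbm) ▸ hs.sInf_mem hsne

theorem Shift.initSegS_of_union (hst : Shift s t) (hs : s.Nonempty) (h : InitSegS (s ∪ t) X) :
    InitSegS s X ∧ InitSegS t (X \ {sInf X}) := by
  obtain ⟨B, -, hsB, htB⟩ := hst
  have hsX : ↑s ⊆ X := fun x hx => h.1 (Finset.mem_union_left t hx)
  have hmin : sInf X = sInf B := by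
    refine le_antisymm (Nat.sInf_le (hsX (hsB.sInf_mem hs))) (Nat.sInf_le ?_)
    rcases Finset.mem_union.1 (h.sInf_mem (hs.mono Finset.subset_union_left)) with hm | hm
    exacts [hsB.1 hm, (htB.1 hm).1]
  refine ⟨⟨hsX, fun x hx b hb hbs => ?_⟩, ⟨fun x hx => ⟨h.1 (Finset.mem_union_right s hx), ?_⟩,
    fun x hx b hb hbt => ?_⟩⟩
  · by_cases hbt : b ∈ t
    · exact hsB.2 x hx b (htB.1 hbt).1 hbs
    · exact h.2 x (Finset.mem_union_left t hx) b hb (by simp [hbs, hbt])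
  · rw [hmin]; exact (htB.1 hx).2
  · by_cases hbs : b ∈ s
    · exact htB.2 x hx b ⟨hsB.1 hbs, hmin ▸ hb.2⟩ hbt
    · exact h.2 x (Finset.mem_union_right s hx) b hb.1 (by simp [hbs, hbt])

end InitialSegments

def IsThin (F : Set (Finset ℕ)) : Prop :=
  ∀ s ∈ F, ∀ t ∈ F, InitSegF s t → s = t

section Fronts

variable {F G : Set (Finset ℕ)} {A B C : Set ℕ} {s t : Finset ℕ} {a : ℕ}

theorem IsThin.eq_of_initSegS (hF : IsThin F) (hs : s ∈ F) (ht : t ∈ F)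
    (hsB : InitSegS s B) (htB : InitSegS t B) : s = t :=
  (initSegS_comparable hsB htB).elim (hF s hs t ht) fun h => (hF t ht s hs h).symm

theorem IsThin.eq_singleton_empty (hF : IsThin F) (h : ∅ ∈ F) : F = {∅} :=
  Set.eq_singleton_iff_unique_mem.2
    ⟨h, fun s hs => (hF ∅ h s hs ⟨Finset.empty_subset s, by simp⟩).symm⟩

theorem IsFront.isThin (hF : IsFront F A) : IsThin F := hF.2.2.1

theorem IsFront.exists_initSegS (hF : IsFront F A) (hBA : B ⊆ A) (hB : B.Infinite) :
    ∃ s ∈ F, InitSegS s B :=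
  let ⟨s, hs, _⟩ := hF.2.2.2 B hBA hB
  ⟨s, hs⟩

theorem IsFront.coe_subset (hF : IsFront F A) (hs : s ∈ F) : ↑s ⊆ A := by
  rcases hF.2.1 with h | h
  · rw [h, Set.mem_singleton_iff] at hs
    simp [hs]
  · exact h ▸ Set.subset_biUnion_of_mem (u := fun s : Finset ℕ => (s : Set ℕ)) hs

theorem IsFront.nonempty_of_mem (hF : IsFront F A) (hne : F ≠ {∅}) (hs : s ∈ F) :
    s.Nonempty :=
  Finset.nonempty_iff_ne_empty.2 fun h => hne (hF.isThin.eq_singleton_empty (h ▸ hs))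

theorem infinite_inter_Ioi (hA : A.Infinite) (n : ℕ) : (A ∩ Ioi n).Infinite := by
  simpa [Set.sdiff_eq, Set.compl_Iic] using hA.sdiff (Set.finite_Iic n)

theorem sInf_insert_of_forall_lt (h : ∀ c ∈ C, a < c) : sInf (insert a C) = a :=
  IsLeast.csInf_eq ⟨Set.mem_insert a C, Set.forall_mem_insert.2 ⟨le_rfl, fun c hc => (h c hc).le⟩⟩

theorem isFront_of_exists_initSegS (hB : B.Infinite) (hsub : ∀ s ∈ G, ↑s ⊆ B) (hG : IsThin G)
    (hex : ∀ C ⊆ B, C.Infinite → ∃ s ∈ G, InitSegS s C) : IsFront G B := by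
  refine ⟨hB, ?_, hG, fun C hCB hC => ?_⟩
  · by_cases h : ∅ ∈ G
    · exact Or.inl (hG.eq_singleton_empty h)
    refine Or.inr (Set.Subset.antisymm (Set.iUnion₂_subset hsub) fun b hb => ?_)
    have hlt : ∀ c ∈ B ∩ Ioi b, b < c := fun c hc => hc.2
    obtain ⟨s, hs, hsC⟩ := hex (insert b (B ∩ Ioi b)) (Set.insert_subset hb Set.inter_subset_left)
      ((infinite_inter_Ioi hB b).mono (Set.subset_insert _ _))
    have hbs := hsC.sInf_mem (Finset.nonempty_iff_ne_empty.2 fun h' => h (h' ▸ hs))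
    rw [sInf_insert_of_forall_lt hlt] at hbs
    exact Set.mem_biUnion hs hbs
  · obtain ⟨s, hs, hsC⟩ := hex C hCB hC
    exact ⟨s, ⟨hs, hsC⟩, fun t ht => hG.eq_of_initSegS ht.1 hs ht.2 hsC⟩

def frontRestrict (F : Set (Finset ℕ)) (B : Set ℕ) : Set (Finset ℕ) := {s ∈ F | ↑s ⊆ B}

theorem IsFront.restrict (hF : IsFront F A) (hBA : B ⊆ A) (hB : B.Infinite) :
    IsFront (frontRestrict F B) B :=
  isFront_of_exists_initSegS hB (fun _ hs => hs.2) (fun s hs t ht => hF.isThin s hs.1 t ht.1)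
    fun _ hCB hC =>
      let ⟨s, hs, hsC⟩ := hF.exists_initSegS (hCB.trans hBA) hC
      ⟨s, ⟨hs, hsC.1.trans hCB⟩, hsC⟩

theorem IsFront.exists_shift_chain (hF : IsFront F A) :
    ∃ g : ℕ → Finset ℕ, (∀ n, g n ∈ F) ∧ ∀ n, Shift (g n) (g (n + 1)) := by
  let D : ℕ → Set ℕ := fun n => (fun X => X \ {sInf X})^[n] A
  have hD : ∀ n, D n ⊆ A ∧ (D n).Infinite := by
    intro n
    induction n with
    | zero => exact ⟨Set.Subset.rfl, hF.1⟩
    | succ n ih =>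
      simp only [D, Function.iterate_succ_apply']
      exact ⟨Set.sdiff_subset.trans ih.1, ih.2.sdiff (Set.finite_singleton _)⟩
  choose g hgF hg using fun n => hF.exists_initSegS (hD n).1 (hD n).2
  refine ⟨g, hgF, fun n => ⟨D n, (hD n).2, hg n, ?_⟩⟩
  simpa only [D, Function.iterate_succ_apply'] using hg (n + 1)

theorem IsFront.exists_shift (hF : IsFront F A) : ∃ s ∈ F, ∃ t ∈ F, Shift s t :=
  let ⟨g, hgF, hg⟩ := hF.exists_shift_chain
  ⟨g 0, hgF 0, g 1, hgF 1, hg 0⟩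

end Fronts

def frontDeriv (F : Set (Finset ℕ)) (a : ℕ) : Set (Finset ℕ) :=
  {t | insert a t ∈ F ∧ ∀ x ∈ t, a < x}

section Derivatives

variable {F : Set (Finset ℕ)} {A B : Set ℕ} {s : Finset ℕ} {a : ℕ}

theorem InitSegS.erase_sInf_mem_frontDeriv (h : InitSegS s B) (hs : s ∈ F) (hne : s.Nonempty) :
    s.erase (sInf B) ∈ frontDeriv F (sInf B) ∧ InitSegS (s.erase (sInf B)) (B \ {sInf B}) := by
  have herase := h.erase_sInf
  refine ⟨⟨by rwa [Finset.insert_erase (h.sInf_mem hne)], fun x hx => ?_⟩, herase⟩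
  obtain ⟨hxB, hx⟩ := herase.1 hx
  exact (Nat.sInf_le hxB).lt_of_ne (Ne.symm hx)

theorem IsFront.derive (hF : IsFront F A) (hne : F ≠ {∅}) (ha : a ∈ A) :
    IsFront (frontDeriv F a) (A ∩ Ioi a) := by
  refine isFront_of_exists_initSegS (infinite_inter_Ioi hF.1 a)
    (fun t ht x hx => ⟨hF.coe_subset ht.1 (Finset.mem_insert_of_mem hx), ht.2 x hx⟩) ?_ ?_
  · intro t ht t' ht' htt'
    have hat : a ∉ t := fun h => lt_irrefl a (ht.2 a h)
    have hat' : a ∉ t' := fun h => lt_irrefl a (ht'.2 a h)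
    have h : InitSegS (insert a t) ↑(insert a t') := by
      rw [Finset.coe_insert]; exact (initSegF_iff_initSegS.1 htt').insert_of_forall_lt ht'.2
    have := hF.isThin.eq_of_initSegS ht.1 ht'.1 h (initSegS_coe_self _)
    rw [← Finset.erase_insert hat, this, Finset.erase_insert hat']
  · intro C hC hCinf
    have hlt : ∀ c ∈ C, a < c := fun c hc => (hC hc).2
    obtain ⟨s, hs, hsC⟩ := hF.exists_initSegS
      (Set.insert_subset ha fun c hc => (hC hc).1) (hCinf.mono (Set.subset_insert a C))
    have := hsC.erase_sInf_mem_frontDeriv hs (hF.nonempty_of_mem hne hs)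
    rw [sInf_insert_of_forall_lt hlt,
      Set.insert_sdiff_self_of_notMem fun h => lt_irrefl a (hlt a h)] at this
    exact ⟨_, this⟩

end Derivatives

structure Front where
  sets : Set (Finset ℕ)
  base : Set ℕ
  isFront : IsFront sets base

def Front.IsDeriv (G F : Front) : Prop :=
  F.sets ≠ {∅} ∧ ∃ a ∈ F.base, G.sets = frontDeriv F.sets a ∧ G.base = F.base ∩ Ioi a

theorem sInf_image_Ici {a : ℕ → ℕ} (ha : StrictMono a) (n : ℕ) :
    sInf (a '' Ici n) = a n :=
  IsLeast.csInf_eq ⟨⟨n, Set.self_mem_Ici, rfl⟩, by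
    rintro _ ⟨j, hj, rfl⟩; exact ha.monotone hj⟩

theorem image_Ici_sdiff {a : ℕ → ℕ} (ha : StrictMono a) (n : ℕ) :
    a '' Ici n \ {a n} = a '' Ici (n + 1) := by
  rw [← Set.image_singleton, ← Set.image_sdiff ha.injective, Set.Ici_sdiff_left,
    Set.Ici_add_one_eq_Ioi]

/-- Along a sequence of derivatives `F₀, F₁ = (F₀)_{a₀}, F₂ = (F₁)_{a₁}, …` the member of `Fₙ`
that is an initial segment of `{aₙ, aₙ₊₁, …}` loses its least element at each step. -/
theorem Front.wellFounded_isDeriv : WellFounded Front.IsDeriv := by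
  refine wellFounded_iff_isEmpty_descending_chain.2 ⟨fun ⟨f, hf⟩ => ?_⟩
  choose hne a ha hsets hbase using hf
  have hbase_anti : Antitone fun n => (f n).base :=
    antitone_nat_of_succ_le fun n => (hbase n).trans_subset Set.inter_subset_left
  have ha_mono : StrictMono a := strictMono_nat_of_lt_succ fun n => by
    have := ha (n + 1); rw [hbase n] at this; exact this.2
  have hsub : ∀ n, a '' Ici n ⊆ (f n).base := by
    rintro n _ ⟨j, hj, rfl⟩; exact hbase_anti hj (ha j)
  have step : ∀ n t, t ∈ (f n).sets → InitSegS t (a '' Ici n) →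
      a n ∈ t ∧ t.erase (a n) ∈ (f (n + 1)).sets ∧ InitSegS (t.erase (a n)) (a '' Ici (n + 1)) := by
    intro n t ht htB
    have htne := (f n).isFront.nonempty_of_mem (hne n) ht
    have := htB.erase_sInf_mem_frontDeriv ht htne
    rw [sInf_image_Ici ha_mono, image_Ici_sdiff ha_mono, ← hsets] at this
    exact ⟨sInf_image_Ici ha_mono n ▸ htB.sInf_mem htne, this⟩
  suffices ∀ k n t, t.card ≤ k → t ∈ (f n).sets → InitSegS t (a '' Ici n) → False by
    obtain ⟨t, ht, htB⟩ := (f 0).isFront.exists_initSegS (hsub 0)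
      ((Set.Ici_infinite 0).image ha_mono.injective.injOn)
    exact this _ 0 t le_rfl ht htB
  intro k
  induction k with
  | zero =>
    intro n t hk ht htB
    exact Finset.card_pos.2 ⟨_, (step n t ht htB).1⟩ |>.ne' (Nat.le_zero.1 hk)
  | succ k ih =>
    intro n t hk ht htB
    obtain ⟨hat, ht', htB'⟩ := step n t ht htB
    exact ih (n + 1) _ (by rw [Finset.card_erase_of_mem hat]; omega) ht' htB'

/-- Diagonalisation (fusion) of a sequence of shrinking infinite sets: `aₙ` is the least element
of the `n`-th set and the next set is chosen inside the previous one above `aₙ`. -/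
theorem exists_strictMono_fusion {C : Set ℕ} (hC : C.Infinite) (Q : ℕ → Set ℕ → Prop)
    (hQ : ∀ D ⊆ C, D.Infinite → ∃ D' ⊆ D ∩ Ioi (sInf D), D'.Infinite ∧ Q (sInf D) D')
    (hQ_anti : ∀ a D D', D' ⊆ D → Q a D → Q a D') :
    ∃ a : ℕ → ℕ, StrictMono a ∧ (∀ n, a n ∈ C) ∧ ∀ n, Q (a n) (a '' Ioi n) := by
  choose! next hnext_sub hnext_inf hnext_Q using hQ
  let D : ℕ → Set ℕ := fun n => next^[n] C
  have hD_succ : ∀ n, D (n + 1) = next (D n) := fun n => Function.iterate_succ_apply' _ _ _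
  have hD : ∀ n, D n ⊆ C ∧ (D n).Infinite := by
    intro n
    induction n with
    | zero => exact ⟨Set.Subset.rfl, hC⟩
    | succ n ih =>
      rw [hD_succ]
      exact ⟨(hnext_sub _ ih.1 ih.2).trans (Set.inter_subset_left.trans ih.1),
        hnext_inf _ ih.1 ih.2⟩
  have hD_sub : ∀ n, D (n + 1) ⊆ D n ∩ Ioi (sInf (D n)) := fun n =>
    hD_succ n ▸ hnext_sub _ (hD n).1 (hD n).2
  have hD_anti : Antitone D :=
    antitone_nat_of_succ_le fun n => (hD_sub n).trans Set.inter_subset_left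
  have hmem : ∀ n, sInf (D n) ∈ D n := fun n => Nat.sInf_mem (hD n).2.nonempty
  refine ⟨fun n => sInf (D n), strictMono_nat_of_lt_succ fun n => (hD_sub n (hmem (n + 1))).2,
    fun n => (hD n).1 (hmem n), fun n => hQ_anti _ _ _ ?_ (hnext_Q _ (hD n).1 (hD n).2)⟩
  rintro _ ⟨j, hj, rfl⟩
  exact hD_succ n ▸ hD_anti (Nat.succ_le_of_lt hj) (hmem j)

def IsHomogeneous (F : Set (Finset ℕ)) (p : Finset ℕ → Prop) (B : Set ℕ) : Prop :=
  ∃ c : Prop, ∀ s ∈ F, ↑s ⊆ B → (p s ↔ c)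

theorem IsHomogeneous.mono {F : Set (Finset ℕ)} {p : Finset ℕ → Prop} {B B' : Set ℕ}
    (h : IsHomogeneous F p B) (hB : B' ⊆ B) : IsHomogeneous F p B' :=
  let ⟨c, hc⟩ := h
  ⟨c, fun s hs hsB => hc s hs (hsB.trans hB)⟩

/-- Nash-Williams' partition theorem for fronts, by well-founded induction on derivatives:
homogeneity of each derived front `F_{aₙ}` on the fusion sequence, and the pigeonhole principle
on the colours of these derived fronts. -/
theorem Front.exists_isHomogeneous (F : Front) (p : Finset ℕ → Prop) {C : Set ℕ}
    (hCA : C ⊆ F.base) (hC : C.Infinite) : ∃ B ⊆ C, B.Infinite ∧ IsHomogeneous F.sets p B := by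
  induction F using Front.wellFounded_isDeriv.induction generalizing p C with
  | _ F ih =>
  by_cases hne : F.sets = {∅}
  · refine ⟨C, Set.Subset.rfl, hC, p ∅, fun s hs _ => ?_⟩
    rw [hne, Set.mem_singleton_iff] at hs
    rw [hs]
  have step : ∀ D ⊆ C, D.Infinite → ∃ D' ⊆ D ∩ Ioi (sInf D), D'.Infinite ∧
      IsHomogeneous (frontDeriv F.sets (sInf D)) (fun u => p (insert (sInf D) u)) D' := by
    intro D hDC hD
    have ha : sInf D ∈ F.base := hCA (hDC (Nat.sInf_mem hD.nonempty))
    exact ih ⟨_, _, F.isFront.derive hne ha⟩ ⟨hne, _, ha, rfl, rfl⟩ _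
      (Set.inter_subset_inter_left _ (hDC.trans hCA)) (infinite_inter_Ioi hD _)
  obtain ⟨a, ha_mono, haC, hhom⟩ :=
    exists_strictMono_fusion hC
      (fun a => IsHomogeneous (frontDeriv F.sets a) fun u => p (insert a u))
      step fun _ _ _ hD h => h.mono hD
  choose c hc using hhom
  obtain ⟨c₀, hc₀⟩ := Finite.exists_infinite_fiber c
  refine ⟨a '' (c ⁻¹' {c₀}), ?_, (Set.infinite_coe_iff.1 hc₀).image ha_mono.injective.injOn,
    c₀, fun s hs hsB => ?_⟩
  · rintro _ ⟨n, -, rfl⟩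
    exact haC n
  have hsne := F.isFront.nonempty_of_mem hne hs
  obtain ⟨k, hk, hks⟩ := hsB (s.min'_mem hsne)
  have herase : s.erase (a k) ∈ frontDeriv F.sets (a k) := by
    refine ⟨by rwa [Finset.insert_erase (hks ▸ s.min'_mem hsne)], fun x hx => ?_⟩
    exact hks ▸ s.min'_lt_of_mem_erase_min' hsne (hks ▸ hx)
  have hsub : ↑(s.erase (a k)) ⊆ a '' Ioi k := by
    intro x hx
    obtain ⟨j, -, rfl⟩ := hsB (Finset.mem_of_mem_erase hx)
    exact ⟨j, ha_mono.lt_iff_lt.1 (herase.2 _ hx), rfl⟩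
  have : p (insert (a k) (s.erase (a k))) ↔ c k := hc k _ herase hsub
  rwa [Finset.insert_erase (hks ▸ s.min'_mem hsne), Set.mem_preimage.1 hk] at this

def pairFront (F : Set (Finset ℕ)) : Set (Finset ℕ) :=
  {u | ∃ s ∈ F, ∃ t ∈ F, Shift s t ∧ s ∪ t = u}

noncomputable def pairSplit (F : Set (Finset ℕ)) (u : Finset ℕ) : Finset ℕ × Finset ℕ :=
  Classical.epsilon fun p => p.1 ∈ F ∧ p.2 ∈ F ∧ Shift p.1 p.2 ∧ p.1 ∪ p.2 = u

section PairFront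

variable {F : Set (Finset ℕ)} {A : Set ℕ} {s t s' t' : Finset ℕ}

theorem IsFront.eq_of_initSegS_union (hF : IsFront F A) (hne : F ≠ {∅}) {X : Set ℕ}
    (hs : s ∈ F) (ht : t ∈ F) (hst : Shift s t) (hs' : s' ∈ F) (ht' : t' ∈ F)
    (hst' : Shift s' t') (h : InitSegS (s ∪ t) X) (h' : InitSegS (s' ∪ t') X) :
    s = s' ∧ t = t' := by
  obtain ⟨h₁, h₂⟩ := hst.initSegS_of_union (hF.nonempty_of_mem hne hs) h
  obtain ⟨h₁', h₂'⟩ := hst'.initSegS_of_union (hF.nonempty_of_mem hne hs') h'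
  exact ⟨hF.isThin.eq_of_initSegS hs hs' h₁ h₁', hF.isThin.eq_of_initSegS ht ht' h₂ h₂'⟩

theorem IsFront.pair (hF : IsFront F A) (hne : F ≠ {∅}) : IsFront (pairFront F) A := by
  refine isFront_of_exists_initSegS hF.1 ?_ ?_ fun C hCA hC => ?_
  · rintro _ ⟨s, hs, t, ht, -, rfl⟩
    rw [Finset.coe_union]
    exact Set.union_subset (hF.coe_subset hs) (hF.coe_subset ht)
  · rintro _ ⟨s, hs, t, ht, hst, rfl⟩ _ ⟨s', hs', t', ht', hst', rfl⟩ h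
    obtain ⟨rfl, rfl⟩ := hF.eq_of_initSegS_union hne hs ht hst hs' ht' hst'
      (initSegF_iff_initSegS.1 h) (initSegS_coe_self _)
    rfl
  · obtain ⟨s, hs, hsC⟩ := hF.exists_initSegS hCA hC
    obtain ⟨t, ht, htC⟩ := hF.exists_initSegS (Set.sdiff_subset.trans hCA)
      (hC.sdiff (Set.finite_singleton _))
    exact ⟨s ∪ t, ⟨s, hs, t, ht, ⟨C, hC, hsC, htC⟩, rfl⟩,
      hsC.union (hF.nonempty_of_mem hne hs) htC⟩

theorem IsFront.pairSplit_union (hF : IsFront F A) (hne : F ≠ {∅}) (hs : s ∈ F) (ht : t ∈ F)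
    (hst : Shift s t) : pairSplit F (s ∪ t) = (s, t) := by
  obtain ⟨hs', ht', hst', h⟩ := Classical.epsilon_spec
    (p := fun p : Finset ℕ × Finset ℕ => p.1 ∈ F ∧ p.2 ∈ F ∧ Shift p.1 p.2 ∧ p.1 ∪ p.2 = s ∪ t)
    ⟨(s, t), hs, ht, hst, rfl⟩
  obtain ⟨h₁, h₂⟩ := hF.eq_of_initSegS_union hne hs' ht' hst' hs ht hst
    (by rw [h]; exact initSegS_coe_self _) (initSegS_coe_self _)
  exact Prod.ext h₁ h₂

theorem IsFront.eq_of_shift_union (hF : IsFront F A) (hne : F ≠ {∅}) (hs : s ∈ F) (ht : t ∈ F)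
    (hst : Shift s t) (hs' : s' ∈ F) (hst' : Shift s' t') (h : Shift (s ∪ t) (s' ∪ t')) :
    t = s' := by
  obtain ⟨W, -, hW, hW'⟩ := h
  exact hF.isThin.eq_of_initSegS ht hs' (hst.initSegS_of_union (hF.nonempty_of_mem hne hs) hW).2
    (hst'.initSegS_of_union (hF.nonempty_of_mem hne hs') hW').1

/-- Ramsey's theorem for shifted pairs of a front: Nash-Williams' theorem applied to `F²`. -/
theorem IsFront.exists_shift_homogeneous (hF : IsFront F A) (q : Finset ℕ → Finset ℕ → Prop) :
    ∃ B ⊆ A, B.Infinite ∧ ∃ c : Prop, ∀ s ∈ frontRestrict F B, ∀ t ∈ frontRestrict F B,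
      Shift s t → (q s t ↔ c) := by
  by_cases hne : F = {∅}
  · refine ⟨A, Set.Subset.rfl, hF.1, q ∅ ∅, fun s hs t ht _ => ?_⟩
    rw [hne] at hs ht
    rw [Set.mem_singleton_iff.1 hs.1, Set.mem_singleton_iff.1 ht.1]
  obtain ⟨B, hBA, hB, c, hc⟩ := Front.exists_isHomogeneous ⟨_, _, hF.pair hne⟩
    (fun u => q (pairSplit F u).1 (pairSplit F u).2) Set.Subset.rfl hF.1
  refine ⟨B, hBA, hB, c, fun s hs t ht hst => ?_⟩
  have : q (pairSplit F (s ∪ t)).1 (pairSplit F (s ∪ t)).2 ↔ c :=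
    hc (s ∪ t) ⟨s, hs.1, t, ht.1, hst, rfl⟩
      (by rw [Finset.coe_union]; exact Set.union_subset hs.2 ht.2)
  rwa [hF.pairSplit_union hne hs.1 ht.1 hst] at this

end PairFront

section Bpo

variable {α β : Type*} {r r₁ r₂ : α → α → Prop}

theorem IsBpo.comap {rβ : β → β → Prop} (h : IsBpo rβ) (φ : α → β)
    (hφ : ∀ a b, rβ (φ a) (φ b) → r a b) : IsBpo r := by
  rintro ⟨A, F, f, hF, hbad⟩
  exact h ⟨A, F, φ ∘ f, hF, fun s hs t ht hst hr => hbad s hs t ht hst (hφ _ _ hr)⟩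

theorem IsBpo.mono (h : IsBpo r₁) (hr : ∀ a b, r₁ a b → r₂ a b) : IsBpo r₂ :=
  h.comap id hr

theorem IsBpo.inf (h₁ : IsBpo r₁) (h₂ : IsBpo r₂) : IsBpo fun a b => r₁ a b ∧ r₂ a b := by
  rintro ⟨A, F, f, hF, hbad⟩
  obtain ⟨B, hBA, hB, c, hc⟩ := hF.exists_shift_homogeneous fun s t => r₁ (f s) (f t)
  by_cases hc' : c
  · exact h₂ ⟨B, frontRestrict F B, f, hF.restrict hBA hB, fun s hs t ht hst hr =>
      hbad s hs.1 t ht.1 hst ⟨(hc s hs t ht hst).2 hc', hr⟩⟩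
  · exact h₁ ⟨B, frontRestrict F B, f, hF.restrict hBA hB, fun s hs t ht hst hr =>
      hc' ((hc s hs t ht hst).1 hr)⟩

theorem IsBpo.prod {rβ : β → β → Prop} (h₁ : IsBpo r) (h₂ : IsBpo rβ) :
    IsBpo fun x y : α × β => r x.1 y.1 ∧ rβ x.2 y.2 :=
  (h₁.comap Prod.fst fun _ _ h => h).inf (h₂.comap Prod.snd fun _ _ h => h)

theorem isBpo_nat : IsBpo ((· ≤ ·) : ℕ → ℕ → Prop) := by
  rintro ⟨A, F, f, hF, hbad⟩
  obtain ⟨g, hgF, hg⟩ := hF.exists_shift_chain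
  obtain ⟨n, hn⟩ := WellFounded.not_rel_apply_succ (r := (· < ·)) (f ∘ g)
  exact hbad _ (hgF n) _ (hgF (n + 1)) (hg n) (not_lt.1 hn)

theorem IsBpo.exists_shift_shift (h : IsBpo r) {F : Set (Finset ℕ)} {A : Set ℕ}
    (hF : IsFront F A) (hne : F ≠ {∅}) (g : Finset ℕ → Finset ℕ → α) :
    ∃ s ∈ F, ∃ t ∈ F, ∃ t' ∈ F, Shift s t ∧ Shift t t' ∧ r (g s t) (g t t') := by
  by_contra! hbad
  refine h ⟨A, pairFront F, fun u => g (pairSplit F u).1 (pairSplit F u).2, hF.pair hne, ?_⟩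
  rintro _ ⟨s, hs, t, ht, hst, rfl⟩ _ ⟨s', hs', t', ht', hst', rfl⟩ hshift
  obtain rfl := hF.eq_of_shift_union hne hs ht hst hs' hst' hshift
  simp only [hF.pairSplit_union hne hs ht hst, hF.pairSplit_union hne ht ht' hst']
  exact hbad s hs t ht t' ht' hst hst'

/-- Binders ordered as in `IsLowerSet`, to which this unfolds for `r = (· ≤ ·)`. -/
def IsLowerSetWrt (r : α → α → Prop) (D : Set α) : Prop :=
  ∀ ⦃a b⦄, r b a → a ∈ D → b ∈ D

/-- A bad sequence `f` of lower sets provides witnesses `g s t ∈ f s \ f t` for `s ◁ t`; a pair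
`r (g s t) (g t t')` would put `g s t` into the lower set `f t`. -/
theorem IsBpo.lowerSets (h : IsBpo r) :
    IsBpo fun D D' : {D : Set α // IsLowerSetWrt r D} => D.1 ⊆ D'.1 := by
  rintro ⟨A, F, f, hF, hbad⟩
  obtain ⟨s₀, hs₀, t₀, ht₀, hst₀⟩ := hF.exists_shift
  by_cases hne : F = {∅}
  · refine hbad s₀ hs₀ t₀ ht₀ hst₀ ?_
    rw [hne] at hs₀ ht₀
    rw [Set.mem_singleton_iff.1 hs₀, Set.mem_singleton_iff.1 ht₀]
  obtain ⟨x, -⟩ := Set.not_subset.1 (hbad s₀ hs₀ t₀ ht₀ hst₀)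
  have : Nonempty α := ⟨x⟩
  choose! g hg using fun s (hs : s ∈ F) t (ht : t ∈ F) (hst : Shift s t) =>
    Set.not_subset.1 (hbad s hs t ht hst)
  obtain ⟨s, hs, t, ht, t', ht', hst, htt', hr⟩ := h.exists_shift_shift hF hne g
  exact (hg s hs t ht hst).2 ((f t).2 hr (hg t ht t' ht' htt').1)

end Bpo

section Multisets

variable {α : Type*} {r : α → α → Prop} {N M M' : Multiset α} {p : α}

def MCover (r : α → α → Prop) (N M : Multiset α) : Prop :=
  ∀ p ∈ M, ∃ x ∈ N, r x p

theorem mProj_of_rel (h : Multiset.Rel r N M) : MProj r N M := by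
  induction h with
  | zero => exact ⟨0, rfl, rfl, by simp⟩
  | @cons a b N M hab _ ih =>
    obtain ⟨L, hL₁, hL₂, hL₃⟩ := ih
    refine ⟨(a, {b}) ::ₘ L, by simp [hL₁], by simp [hL₂, Multiset.singleton_add], ?_⟩
    intro x hx
    rcases Multiset.mem_cons.1 hx with rfl | hx
    · exact ⟨Multiset.singleton_ne_zero b, fun p hp => Multiset.mem_singleton.1 hp ▸ hab⟩
    · exact hL₃ x hx

theorem MProj.cons (h : MProj r N M) (hp : ∃ x ∈ N, r x p) : MProj r N (p ::ₘ M) := by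
  classical
  obtain ⟨L, rfl, rfl, hL⟩ := h
  obtain ⟨x, hxL, hx⟩ : ∃ x ∈ L, r x.1 p := by simpa using hp
  refine ⟨(x.1, p ::ₘ x.2) ::ₘ L.erase x, ?_, ?_, fun y hy => ?_⟩
  · conv_rhs => rw [← Multiset.cons_erase hxL]
    simp
  · conv_rhs => rw [← Multiset.cons_erase hxL]
    simp
  · rcases Multiset.mem_cons.1 hy with rfl | hy
    · exact ⟨Multiset.cons_ne_zero, Multiset.forall_mem_cons.2 ⟨hx, (hL x hxL).2⟩⟩
    · exact hL y (Multiset.mem_of_mem_erase hy)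

theorem MProj.add_of_mCover (h : MProj r N M) (hc : MCover r N M') : MProj r N (M + M') := by
  induction M' using Multiset.induction_on with
  | empty => simpa using h
  | cons p M' ih =>
    rw [Multiset.add_cons]
    exact (ih fun q hq => hc q (Multiset.mem_cons_of_mem hq)).cons
      (hc p (Multiset.mem_cons_self p M'))

theorem mProj_of_mEmbed_of_mCover (he : MEmbed r N M) (hc : MCover r N M) : MProj r N M := by
  obtain ⟨M', hM', hrel⟩ := he
  obtain ⟨M'', rfl⟩ := Multiset.le_iff_exists_add.1 hM'
  exact (mProj_of_rel hrel).add_of_mCover fun p hp => hc p (Multiset.mem_add.2 (Or.inr hp))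

open Classical in
theorem countP_eq_card_filter_univ (K : Multiset α) (U : Set α) :
    K.countP (· ∈ U) = (univ.filter fun y : K => (y : α) ∈ U).card := by
  conv_lhs => rw [← Multiset.map_univ_coe K]
  rw [Multiset.countP_map]
  rfl

open Classical in
/-- Hall's marriage theorem for the bipartite graph `x ≤ y` between the elements of `N` and
those of `M`: Hall's condition for `S ⊆ N` is the hypothesis for the upper closure of `S`. -/
theorem mEmbed_of_forall_countP_le [Preorder α]
    (h : ∀ U : Set α, IsUpperSet U → N.countP (· ∈ U) ≤ M.countP (· ∈ U)) :
    MEmbed (· ≤ ·) N M := by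
  have hall : ∀ S : Finset N,
      S.card ≤ (S.biUnion fun x => univ.filter fun y : M => (x : α) ≤ y).card := by
    intro S
    obtain ⟨U, hU, hUS⟩ : ∃ U : Set α, IsUpperSet U ∧ ∀ p, p ∈ U ↔ ∃ x ∈ S, (x : α) ≤ p :=
      ⟨{p | ∃ x ∈ S, (x : α) ≤ p}, fun _ _ hab ⟨x, hx, hxa⟩ => ⟨x, hx, hxa.trans hab⟩,
        fun _ => Iff.rfl⟩
    calc S.card ≤ (univ.filter fun x : N => (x : α) ∈ U).card :=
          card_le_card fun x hx => mem_filter.2 ⟨mem_univ x, (hUS _).2 ⟨x, hx, le_rfl⟩⟩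
      _ = N.countP (· ∈ U) := (countP_eq_card_filter_univ N U).symm
      _ ≤ M.countP (· ∈ U) := h U hU
      _ = (univ.filter fun y : M => (y : α) ∈ U).card := countP_eq_card_filter_univ M U
      _ = _ := by congr 1; ext y; simp [hUS]
  obtain ⟨f, hf_inj, hf⟩ := (all_card_le_biUnion_card_iff_exists_injective _).1 hall
  refine ⟨(univ.val.map f).map fun y : M => (y : α), ?_, ?_⟩
  · conv_rhs => rw [← Multiset.map_univ_coe M]
    exact Multiset.map_le_map (Finset.val_le_iff.2 (subset_univ (univ.map ⟨f, hf_inj⟩)))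
  · conv_lhs => rw [← Multiset.map_univ_coe N]
    rw [Multiset.map_map, Multiset.rel_map]
    exact Multiset.rel_refl_of_refl_on fun x _ => (mem_filter.1 (hf x)).2

end Multisets

section MultisetBpo

variable {P : Type*} [Preorder P]

theorem isBpo_mCover (h : IsBpo ((· ≤ ·) : P → P → Prop)) :
    IsBpo (MCover ((· ≤ ·) : P → P → Prop)) :=
  h.lowerSets.comap (fun M => ⟨(upperClosure {x | x ∈ M} : Set P)ᶜ, (upperClosure _).upper.compl⟩)
    fun _ _ hNM _ hp => mem_upperClosure.1 (Set.compl_subset_compl.1 hNM (subset_upperClosure hp))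

open Classical in
theorem isBpo_mEmbed (h : IsBpo ((· ≤ ·) : P → P → Prop)) :
    IsBpo (MEmbed ((· ≤ ·) : P → P → Prop)) := by
  refine (h.lowerSets.prod isBpo_nat).lowerSets.comap
    (fun M => ⟨{z | z.2 < M.countP (· ∉ z.1.1)}, ?_⟩) fun N M hNM => ?_
  · rintro ⟨D, k⟩ ⟨D', k'⟩ ⟨hD, hk⟩ (hz : k < M.countP (· ∉ D.1))
    refine hk.trans_lt (hz.trans_le ?_)
    simpa only [Multiset.countP_eq_card_filter] using Multiset.card_le_card
      (Multiset.monotone_filter_right M fun x hx hx' => hx (hD hx'))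
  · refine mEmbed_of_forall_countP_le fun U hU => not_lt.1 fun hlt => ?_
    have := @hNM (⟨Uᶜ, hU.compl⟩, M.countP (· ∈ U)) (by simpa using hlt)
    simp at this

end MultisetBpo

/-- If `P` is a better partial order, then the finite multisets of `P` with the
multiset projectivity relation `<<` form a better partial order. -/
theorem stmt_11 {P : Type*} [PartialOrder P]
    (h : IsBpo ((· ≤ ·) : P → P → Prop)) :
    IsBpo (MProj ((· ≤ ·) : P → P → Prop)) :=
  ((isBpo_mEmbed h).inf (isBpo_mCover h)).mono fun _ _ hNM =>
    mProj_of_mEmbed_of_mCover hNM.1 hNM.2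

end Paper
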